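/- Let Ω ⊆ ℝ^d be open and convex, α > 0, and for x ∈ Ω and ω ∈ S^{d-1} define d_{ω,Ω}(x) := min{|t| : x + tω ∉ Ω}. Define m_α(x)^α := (∫_{S^{d-1}} |ω_d|^α dω)/(∫_{S^{d-1}} d_{ω,Ω}(x)^{-α} dω). Then for every x ∈ Ω, m_α(x) ≤ dist(x,∂Ω). -/

import Mathlib

open Real MeasureTheory RealInnerProductSpace

theorem m_alpha_le_dist (d : ℕ) (hd : 1 ≤ d) (α : ℝ) (hα : 0 < α)
    (Ω : Set (EuclideanSpace ℝ (Fin d))) (hΩo : IsOpen Ω) (hΩc : Convex ℝ Ω)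
    (dω : EuclideanSpace ℝ (Fin d) → EuclideanSpace ℝ (Fin d) → ℝ)
    (hdω : ∀ x ω, dω x ω = sInf ((fun t : ℝ => |t|) '' {t : ℝ | x + t • ω ∉ Ω}))
    (m : EuclideanSpace ℝ (Fin d) → ℝ)
    (hm : ∀ x, m x =
      ((∫ ω in Metric.sphere (0 : EuclideanSpace ℝ (Fin d)) 1,
          |ω ⟨d - 1, by omega⟩| ^ α ∂(μH[(d : ℝ) - 1])) /
        (∫ ω in Metric.sphere (0 : EuclideanSpace ℝ (Fin d)) 1,
          dω x ω ^ (-α) ∂(μH[(d : ℝ) - 1]))) ^ (1 / α)) :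
    ∀ x ∈ Ω, m x ≤ Metric.infDist x (frontier Ω) := by
  intro x hx
  rw [hm x]
  set S := Metric.sphere (0 : EuclideanSpace ℝ (Fin d)) 1 with hS
  set μ : Measure (EuclideanSpace ℝ (Fin d)) := μH[(d : ℝ) - 1] with hμ
  set R := Metric.infDist x (frontier Ω) with hR
  have hR0 : 0 ≤ R := Metric.infDist_nonneg
  have hdω0 : ∀ ω, 0 ≤ dω x ω := by
    intro ω
    rw [hdω]
    apply Real.sInf_nonneg
    rintro t ⟨s, -, rfl⟩
    exact abs_nonneg s
  have hg0 : ∀ ω, 0 ≤ dω x ω ^ (-α) := fun ω => Real.rpow_nonneg (hdω0 ω) _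
  have hB0 : 0 ≤ ∫ ω in S, dω x ω ^ (-α) ∂μ := integral_nonneg fun ω => hg0 ω
  have hA0 : 0 ≤ ∫ ω in S, |ω (⟨d - 1, by omega⟩ : Fin d)| ^ α ∂μ :=
    integral_nonneg fun ω => Real.rpow_nonneg (abs_nonneg _) _
  -- final arithmetic step
  have final : ∀ A B : ℝ, 0 ≤ A → 0 ≤ B → A ≤ R ^ α * B → (A / B) ^ (1 / α) ≤ R := by
    intro A B hA hB hAB
    rcases hB.eq_or_lt with hB' | hB'
    · have hA' : A = 0 := le_antisymm (by rw [← hB'] at hAB; simpa using hAB) hA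
      rw [hA', zero_div, Real.zero_rpow (by positivity)]
      exact hR0
    · have h1 : A / B ≤ R ^ α := (div_le_iff₀ hB').mpr hAB
      have h2 : (A / B) ^ (1 / α) ≤ (R ^ α) ^ (1 / α) :=
        Real.rpow_le_rpow (div_nonneg hA hB) h1 (by positivity)
      rwa [← Real.rpow_mul hR0, mul_one_div_cancel hα.ne', Real.rpow_one] at h2
  -- degenerate case: Ω = univ (empty frontier)
  by_cases hfr : (frontier Ω).Nonempty
  swap
  · have hΩu : Ω = Set.univ := by
      rcases frontier_eq_empty_iff.mp (Set.not_nonempty_iff_eq_empty.mp hfr) with h | h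
      · exact absurd (h ▸ hx) (Set.notMem_empty x)
      · exact h
    have hzero : ∀ ω : EuclideanSpace ℝ (Fin d), dω x ω ^ (-α) = 0 := by
      intro ω
      have : {t : ℝ | x + t • ω ∉ Ω} = ∅ := by
        ext t; simp [hΩu]
      rw [hdω, this, Set.image_empty, Real.sInf_empty,
        Real.zero_rpow (by simpa using hα.ne')]
    have hBz : (∫ ω in S, dω x ω ^ (-α) ∂μ) = 0 := by
      simp only [hzero]
      exact integral_zero _ _
    rw [hBz, div_zero, Real.zero_rpow (by positivity)]
    exact hR0
  -- degenerate case: non-integrable denominator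
  by_cases hgi : Integrable (fun ω => dω x ω ^ (-α)) (μ.restrict S)
  swap
  · rw [integral_undef hgi, div_zero, Real.zero_rpow (by positivity)]
    exact hR0
  -- main case
  have hRpos : 0 < R := by
    rw [hR, ← (isClosed_frontier.notMem_iff_infDist_pos hfr)]
    rw [hΩo.frontier_eq]
    exact fun h => h.2 hx
  obtain ⟨y, hyf, hyd⟩ := isClosed_frontier.exists_infDist_eq_dist hfr x
  have hyΩ : y ∉ Ω := ((hΩo.frontier_eq ▸ hyf)).2
  obtain ⟨f, hf⟩ := geometric_hahn_banach_open_point hΩc hΩo hyΩ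
  set v : EuclideanSpace ℝ (Fin d) := (InnerProductSpace.toDual ℝ (EuclideanSpace ℝ (Fin d))).symm f with hv
  have hvapp : ∀ z : EuclideanSpace ℝ (Fin d), ⟪v, z⟫ = f z := fun z => InnerProductSpace.toDual_symm_apply
  have hvne : v ≠ 0 := by
    intro h
    have h1 : f x < f y := hf x hx
    have h2 : f x = (0 : ℝ) := by rw [← hvapp, h, inner_zero_left]
    have h3 : f y = (0 : ℝ) := by rw [← hvapp, h, inner_zero_left]
    rw [h2, h3] at h1; exact lt_irrefl _ h1
  set ν : EuclideanSpace ℝ (Fin d) := ‖v‖⁻¹ • v with hν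
  have hνnorm : ‖ν‖ = 1 := by
    rw [hν, norm_smul, norm_inv, norm_norm, inv_mul_cancel₀ (norm_ne_zero_iff.mpr hvne)]
  have hsep : ∀ z ∈ Ω, ⟪ν, z⟫ < ⟪ν, y⟫ := by
    intro z hz
    rw [hν, real_inner_smul_left, real_inner_smul_left]
    exact mul_lt_mul_of_pos_left (by rw [hvapp, hvapp]; exact hf z hz)
      (inv_pos.mpr (norm_pos_iff.mpr hvne))
  have hgap : (0 : ℝ) < ⟪ν, y⟫ - ⟪ν, x⟫ := sub_pos.mpr (hsep x hx)
  have hCS : ⟪ν, y⟫ - ⟪ν, x⟫ ≤ R := by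
    have h1 : ⟪ν, y⟫ - ⟪ν, x⟫ = ⟪ν, y - x⟫ := (inner_sub_right ν y x).symm
    have h2 : ⟪ν, y - x⟫ ≤ ‖ν‖ * ‖y - x‖ := real_inner_le_norm ν (y - x)
    rw [h1]
    calc ⟪ν, y - x⟫ ≤ ‖ν‖ * ‖y - x‖ := h2
      _ = ‖y - x‖ := by rw [hνnorm, one_mul]
      _ = dist x y := by rw [dist_eq_norm, norm_sub_rev]
      _ = R := hyd.symm
  -- pointwise bound on the sphere
  have hpt : ∀ ω ∈ S, R ^ (-α) * |⟪ν, ω⟫| ^ α ≤ dω x ω ^ (-α) := by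
    intro ω hω
    have hωn : ‖ω‖ = 1 := by rw [hS, mem_sphere_zero_iff_norm] at hω; exact hω
    by_cases hc : ⟪ν, ω⟫ = 0
    · rw [hc, abs_zero, Real.zero_rpow hα.ne', mul_zero]
      exact hg0 ω
    · set c := ⟪ν, ω⟫ with hcdef
      set t₀ : ℝ := (⟪ν, y⟫ - ⟪ν, x⟫) / c with ht₀
      have hmem : x + t₀ • ω ∉ Ω := by
        intro hmm
        have h1 := hsep _ hmm
        rw [inner_add_right, real_inner_smul_right, ← hcdef, ht₀,
          div_mul_cancel₀ _ hc] at h1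
        linarith
      have hub : dω x ω ≤ |t₀| := by
        rw [hdω]
        apply csInf_le
        · exact ⟨0, by rintro t ⟨s, -, rfl⟩; exact abs_nonneg s⟩
        · exact ⟨t₀, hmem, rfl⟩
      have ht₀le : |t₀| ≤ R / |c| := by
        rw [ht₀, abs_div, abs_of_pos hgap]
        gcongr
      have hdpos : 0 < dω x ω := by
        obtain ⟨ε, hε, hball⟩ := Metric.isOpen_iff.mp hΩo x hx
        rw [hdω]
        refine lt_of_lt_of_le hε (le_csInf ⟨|t₀|, ⟨t₀, hmem, rfl⟩⟩ ?_)
        rintro b ⟨s, hs, rfl⟩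
        by_contra h
        push_neg at h
        apply hs
        apply hball
        rw [Metric.mem_ball, dist_eq_norm, add_sub_cancel_left, norm_smul, hωn,
          mul_one]
        exact h
      have hkey : (R / |c|) ^ (-α) ≤ dω x ω ^ (-α) :=
        Real.rpow_le_rpow_of_nonpos hdpos (hub.trans ht₀le) (neg_nonpos.mpr hα.le)
      have heq : (R / |c|) ^ (-α) = R ^ (-α) * |c| ^ α := by
        rw [Real.div_rpow hR0 (abs_nonneg c), Real.rpow_neg (abs_nonneg c),
          div_eq_mul_inv, inv_inv]
      rw [← heq]
      exact hkey
  -- rotation invariance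
  set i : Fin d := ⟨d - 1, by omega⟩ with hi
  set e : EuclideanSpace ℝ (Fin d) := EuclideanSpace.single i (1 : ℝ) with he
  have henorm : ‖e‖ = 1 := by rw [he, EuclideanSpace.norm_single, norm_one]
  set Q := Submodule.reflection (ℝ ∙ (ν - e))ᗮ with hQ
  have hQν : Q ν = e := Submodule.reflection_sub (hνnorm.trans henorm.symm)
  have hQm : MeasurePreserving Q μ μ :=
    Q.toIsometryEquiv.measurePreserving_hausdorffMeasure _
  have hemb : MeasurableEmbedding Q := Q.toHomeomorph.measurableEmbedding
  have hpre : Q ⁻¹' S = S := by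
    ext ω
    simp [hS, mem_sphere_iff_norm]
  have hrot : (∫ ω in S, |⟪e, ω⟫| ^ α ∂μ) = ∫ ω in S, |⟪ν, ω⟫| ^ α ∂μ := by
    have h1 := hQm.setIntegral_preimage_emb hemb (fun ω => |⟪e, ω⟫| ^ α) S
    rw [hpre] at h1
    rw [← h1]
    simp only [← hQν, Q.inner_map_map]
  -- monotonicity of the integral
  have hlow : R ^ (-α) * (∫ ω in S, |⟪ν, ω⟫| ^ α ∂μ) ≤ ∫ ω in S, dω x ω ^ (-α) ∂μ := by
    have hle : (fun ω : EuclideanSpace ℝ (Fin d) => R ^ (-α) * |⟪ν, ω⟫| ^ α) ≤ᵐ[μ.restrict S]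
        fun ω => dω x ω ^ (-α) := by
      filter_upwards [self_mem_ae_restrict Metric.isClosed_sphere.measurableSet]
        with ω hω using hpt ω hω
    have hmono := integral_mono_of_nonneg
      (f := fun ω : EuclideanSpace ℝ (Fin d) => R ^ (-α) * |⟪ν, ω⟫| ^ α) (g := fun ω => dω x ω ^ (-α))
      (Filter.Eventually.of_forall fun ω => by positivity) hgi hle
    rwa [integral_const_mul] at hmono
  have hA' : (∫ ω in S, |⟪ν, ω⟫| ^ α ∂μ) ≤
      R ^ α * ∫ ω in S, dω x ω ^ (-α) ∂μ := by
    have h := mul_le_mul_of_nonneg_left hlow (Real.rpow_pos_of_pos hRpos α).le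
    rwa [← mul_assoc, ← Real.rpow_add hRpos, add_neg_cancel, Real.rpow_zero,
      one_mul] at h
  have hAe : (∫ ω in S, |ω i| ^ α ∂μ) = ∫ ω in S, |⟪ν, ω⟫| ^ α ∂μ := by
    rw [← hrot]
    congr 1
    funext ω
    rw [he, EuclideanSpace.inner_single_left]
    norm_num
  exact final _ _ hA0 hB0 (by rw [hAe]; exact hA')
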